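/- arXiv:2006.13567 — 3 statements merged into one kernel-verified Lean document; each statement's English description precedes it below -/
import Mathlib

section
/- Let X ⊂ ℝ^d be finite, κ a kernel with κ(x,x) = 1 and 0 ≤ κ(x,y) ≤ ω for all distinct x, y ∈ X. Let π_1, …, π_k be a partition of X with sizes n_1, …, n_k, n = ∑ n_j. For x ∈ π_j and any i ≠ j, if 1/n_j ≥ 3ω then 2κ(x,x)/n_j ≥ (2 n_j² n_i ω + n_i(n_j² ω + n_j)) / (n_i n_j²), and consequently −(2/n_j)∑_{y∈π_j} κ(x,y) + (1/n_j²)∑_{y,z∈π_j} κ(y,z) ≤ −(2/n_i)∑_{y∈π_i} κ(x,y) + (1/n_i²)∑_{y,z∈π_i} κ(y,z). -/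
open Finset

theorem stmt_8 {α : Type*} [DecidableEq α] (X : Finset α) (κ : α → α → ℝ) (ω : ℝ)
    (hκdiag : ∀ x ∈ X, κ x x = 1)
    (hκ : ∀ x ∈ X, ∀ y ∈ X, x ≠ y → 0 ≤ κ x y ∧ κ x y ≤ ω)
    (k : ℕ) (π : Fin k → Finset α)
    (hcover : ∀ a ∈ X, ∃! l : Fin k, a ∈ π l)
    (hsub : ∀ l, π l ⊆ X) (hne : ∀ l, (π l).Nonempty)
    (x : α) (j i : Fin k) (hx : x ∈ π j) (hij : i ≠ j)
    (hωn : 1 / ((π j).card : ℝ) ≥ 3 * ω) :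
    2 * κ x x / ((π j).card : ℝ) ≥
      (2 * ((π j).card : ℝ) ^ 2 * ((π i).card : ℝ) * ω +
        ((π i).card : ℝ) * (((π j).card : ℝ) ^ 2 * ω + ((π j).card : ℝ))) /
      (((π i).card : ℝ) * ((π j).card : ℝ) ^ 2) ∧
    -(2 / ((π j).card : ℝ)) * (∑ y ∈ π j, κ x y) +
        (1 / ((π j).card : ℝ) ^ 2) * (∑ y ∈ π j, ∑ z ∈ π j, κ y z) ≤
      -(2 / ((π i).card : ℝ)) * (∑ y ∈ π i, κ x y) +
        (1 / ((π i).card : ℝ) ^ 2) * (∑ y ∈ π i, ∑ z ∈ π i, κ y z) := by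
  have hxX : x ∈ X := hsub j hx
  have hxni : x ∉ π i := by
    intro hxi
    obtain ⟨l, _, hu⟩ := hcover x hxX
    exact hij ((hu i hxi).trans (hu j hx).symm)
  set nj : ℝ := ((π j).card : ℝ) with hnjdef
  set ni : ℝ := ((π i).card : ℝ) with hnidef
  have hnj1 : (1:ℝ) ≤ nj := by
    have : 1 ≤ (π j).card := card_pos.mpr ⟨x, hx⟩
    simp only [hnjdef]
    exact_mod_cast this
  have hni1 : (1:ℝ) ≤ ni := by
    have : 1 ≤ (π i).card := card_pos.mpr (hne i)
    simp only [hnidef]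
    exact_mod_cast this
  have hnjpos : 0 < nj := lt_of_lt_of_le one_pos hnj1
  have hnipos : 0 < ni := lt_of_lt_of_le one_pos hni1
  obtain ⟨y0, hy0⟩ := hne i
  have hxy0 : x ≠ y0 := fun h => hxni (h ▸ hy0)
  have hω0 : 0 ≤ ω :=
    le_trans (hκ x hxX y0 (hsub i hy0) hxy0).1 (hκ x hxX y0 (hsub i hy0) hxy0).2
  have hω : 3 * ω ≤ 1 / nj := hωn
  constructor
  · rw [hκdiag x hxX]
    have key : (2 * nj ^ 2 * ni * ω + ni * (nj ^ 2 * ω + nj)) / (ni * nj ^ 2)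
        = 3 * ω + 1 / nj := by
      field_simp
      ring
    rw [key, ge_iff_le]
    have : 2 * 1 / nj = 1 / nj + 1 / nj := by ring
    rw [this]
    linarith
  · -- bounds on sums
    have hnonnegj : ∀ y ∈ π j, 0 ≤ κ x y := by
      intro y hy
      by_cases h : x = y
      · rw [← h, hκdiag x hxX]; norm_num
      · exact (hκ x hxX y (hsub j hy) h).1
    have hS1 : (1:ℝ) ≤ ∑ y ∈ π j, κ x y := by
      have := Finset.single_le_sum hnonnegj hx
      rwa [hκdiag x hxX] at this
    have hS2 : ∑ y ∈ π j, ∑ z ∈ π j, κ y z ≤ nj + nj ^ 2 * ω := by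
      have inner : ∀ y ∈ π j, ∑ z ∈ π j, κ y z ≤ 1 + nj * ω := by
        intro y hy
        rw [← Finset.add_sum_erase _ _ hy, hκdiag y (hsub j hy)]
        have h2 : ∑ z ∈ (π j).erase y, κ y z ≤ (((π j).erase y).card : ℝ) * ω := by
          have := Finset.sum_le_card_nsmul ((π j).erase y) (κ y) ω
            (fun z hz => (hκ y (hsub j hy) z (hsub j (mem_of_mem_erase hz))
              (Ne.symm (ne_of_mem_erase hz))).2)
          simpa [nsmul_eq_mul] using this
        have hcard : (((π j).erase y).card : ℝ) ≤ nj := by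
          simp only [hnjdef]
          exact_mod_cast card_erase_le (s := π j) (a := y)
        nlinarith
      calc ∑ y ∈ π j, ∑ z ∈ π j, κ y z ≤ ∑ _y ∈ π j, (1 + nj * ω) :=
            Finset.sum_le_sum inner
        _ = nj * (1 + nj * ω) := by rw [Finset.sum_const, nsmul_eq_mul]
        _ = nj + nj ^ 2 * ω := by ring
    have hS3 : ∑ y ∈ π i, κ x y ≤ ni * ω := by
      have := Finset.sum_le_card_nsmul (π i) (κ x) ω
        (fun y hy => (hκ x hxX y (hsub i hy) (fun h => hxni (h ▸ hy))).2)
      simpa [nsmul_eq_mul] using this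
    have hS4 : 0 ≤ ∑ y ∈ π i, ∑ z ∈ π i, κ y z := by
      apply Finset.sum_nonneg
      intro y hy
      apply Finset.sum_nonneg
      intro z hz
      by_cases h : y = z
      · rw [h, hκdiag z (hsub i hz)]; norm_num
      · exact (hκ y (hsub i hy) z (hsub i hz) h).1
    have hA : -(2 / nj) * (∑ y ∈ π j, κ x y) ≤ -(2 / nj) * 1 :=
      mul_le_mul_of_nonpos_left hS1 (neg_nonpos.mpr (by positivity))
    have hB : (1 / nj ^ 2) * (∑ y ∈ π j, ∑ z ∈ π j, κ y z)
        ≤ (1 / nj ^ 2) * (nj + nj ^ 2 * ω) :=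
      mul_le_mul_of_nonneg_left hS2 (by positivity)
    have hC : -(2 / ni) * (ni * ω) ≤ -(2 / ni) * (∑ y ∈ π i, κ x y) :=
      mul_le_mul_of_nonpos_left hS3 (neg_nonpos.mpr (by positivity))
    have hD : 0 ≤ (1 / ni ^ 2) * (∑ y ∈ π i, ∑ z ∈ π i, κ y z) :=
      mul_nonneg (by positivity) hS4
    have e1 : -(2 / nj) * 1 + (1 / nj ^ 2) * (nj + nj ^ 2 * ω) = -(1 / nj) + ω := by
      field_simp
      ring
    have e2 : -(2 / ni) * (ni * ω) = -(2 * ω) := by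
      field_simp
    have hmid : -(1 / nj) + ω ≤ -(2 * ω) := by linarith
    linarith [hA, hB, hC, hD, e1, e2, hmid]
end

section
/- Let X ⊂ ℝ^d with |X| = n ≥ 2, κ_σ(x,y) = exp(−‖x−y‖²/σ), and m = min_{x≠y∈X} ‖x−y‖². If σ ≤ m/log(3n), then for any partition π_1,…,π_k of X into nonempty clusters and any x ∈ π_j, the feature-space squared distance ‖φ(x) − m_j‖² = κ(x,x) − (2/n_j)∑_{y∈π_j}κ(x,y) + (1/n_j²)∑_{y,z∈π_j}κ(y,z) satisfies ‖φ(x) − m_j‖² ≤ ‖φ(x) − m_i‖² for every i ≠ j. Hence kernel k-means with kernel κ_σ makes no cluster reassignments. -/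
open Finset

theorem stmt_9 (d n : ℕ) (hn : 2 ≤ n) (X : Finset (EuclideanSpace ℝ (Fin d)))
    (hcard : X.card = n) (m σ : ℝ)
    (hm : IsLeast {r : ℝ | ∃ x ∈ X, ∃ y ∈ X, x ≠ y ∧ r = ‖x - y‖ ^ 2} m)
    (hσ0 : 0 < σ) (hσ : σ ≤ m / Real.log (3 * n))
    (k : ℕ) (π : Fin k → Finset (EuclideanSpace ℝ (Fin d)))
    (hcover : ∀ a ∈ X, ∃! l : Fin k, a ∈ π l)
    (hsub : ∀ l, π l ⊆ X) (hne : ∀ l, (π l).Nonempty) :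
    ∀ (j : Fin k), ∀ x ∈ π j, ∀ i : Fin k, i ≠ j →
      Real.exp (-‖x - x‖ ^ 2 / σ) -
          (2 / ((π j).card : ℝ)) * (∑ y ∈ π j, Real.exp (-‖x - y‖ ^ 2 / σ)) +
          (1 / ((π j).card : ℝ) ^ 2) *
            (∑ y ∈ π j, ∑ z ∈ π j, Real.exp (-‖y - z‖ ^ 2 / σ)) ≤
        Real.exp (-‖x - x‖ ^ 2 / σ) -
          (2 / ((π i).card : ℝ)) * (∑ y ∈ π i, Real.exp (-‖x - y‖ ^ 2 / σ)) +
          (1 / ((π i).card : ℝ) ^ 2) *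
            (∑ y ∈ π i, ∑ z ∈ π i, Real.exp (-‖y - z‖ ^ 2 / σ)) := by
  intro j x hxj i hij
  classical
  have hxX : x ∈ X := hsub j hxj
  have hxi : x ∉ π i := by
    intro hxi
    obtain ⟨l, hl, hu⟩ := hcover x hxX
    exact hij ((hu i hxi).trans (hu j hxj).symm)
  set ε := Real.exp (-m / σ) with hεdef
  clear_value ε
  have hε0 : 0 ≤ ε := hεdef ▸ (Real.exp_pos _).le
  -- kernel values of distinct points are at most ε
  have hker : ∀ u ∈ X, ∀ v ∈ X, u ≠ v → Real.exp (-‖u - v‖ ^ 2 / σ) ≤ ε := by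
    intro u hu v hv huv
    rw [hεdef]
    apply Real.exp_le_exp.2
    have hmle : m ≤ ‖u - v‖ ^ 2 := hm.2 ⟨u, hu, v, hv, huv, rfl⟩
    exact (div_le_div_iff_of_pos_right hσ0).2 (neg_le_neg hmle)
  -- ε ≤ 1/(3n)
  have hn1 : (1 : ℝ) < 3 * n := by
    have : (2 : ℝ) ≤ n := by exact_mod_cast hn
    nlinarith
  have hlog : 0 < Real.log (3 * n) := Real.log_pos hn1
  have hmσ : Real.log (3 * n) ≤ m / σ := by
    rw [le_div_iff₀ hσ0]
    have h := (le_div_iff₀ hlog).1 hσ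
    linarith [h]
  have hε3n : ε ≤ 1 / (3 * n) := by
    have : ε ≤ Real.exp (-Real.log (3 * n)) := by
      rw [hεdef]
      apply Real.exp_le_exp.2
      rw [neg_div]
      linarith
    rwa [Real.exp_neg, Real.exp_log (by linarith), ← one_div] at this
  -- cardinalities
  have hnj0 : (0 : ℝ) < ((π j).card : ℝ) := by
    exact_mod_cast Finset.card_pos.2 (hne j)
  have hni0 : (0 : ℝ) < ((π i).card : ℝ) := by
    exact_mod_cast Finset.card_pos.2 (hne i)
  have hnin : ((π i).card : ℝ) ≤ n := by
    exact_mod_cast hcard ▸ Finset.card_le_card (hsub i)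
  -- 3ε ≤ 1/nᵢ
  have h3ε : 3 * ε ≤ 1 / ((π i).card : ℝ) := by
    have h1 : 1 / (n : ℝ) ≤ 1 / ((π i).card : ℝ) :=
      one_div_le_one_div_of_le hni0 hnin
    have hn0 : (0 : ℝ) < n := by positivity
    have : 3 * ε ≤ 3 * (1 / (3 * n)) := by linarith
    have h2 : 3 * (1 / (3 * (n:ℝ))) = 1 / (n:ℝ) := by field_simp
    linarith [h2 ▸ this]
  set S1 := ∑ y ∈ π j, Real.exp (-‖x - y‖ ^ 2 / σ) with hS1def
  set S2 := ∑ y ∈ π i, Real.exp (-‖x - y‖ ^ 2 / σ) with hS2def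
  set Dj := ∑ y ∈ π j, ∑ z ∈ π j, Real.exp (-‖y - z‖ ^ 2 / σ) with hDjdef
  set Di := ∑ y ∈ π i, ∑ z ∈ π i, Real.exp (-‖y - z‖ ^ 2 / σ) with hDidef
  -- bounds on the sums
  have hS1 : 1 ≤ S1 := by
    have h := Finset.single_le_sum (f := fun y => Real.exp (-‖x - y‖ ^ 2 / σ))
      (fun y _ => (Real.exp_pos _).le) hxj
    rw [hS1def]
    simpa using h
  have hS2 : S2 ≤ ((π i).card : ℝ) * ε := by
    calc S2 ≤ ∑ _y ∈ π i, ε := by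
          refine Finset.sum_le_sum fun y hy => hker x hxX y (hsub i hy) ?_
          intro h
          subst h
          exact hxi hy
      _ = ((π i).card : ℝ) * ε := by rw [Finset.sum_const, nsmul_eq_mul]
  have hDi : ((π i).card : ℝ) ≤ Di := by
    calc ((π i).card : ℝ) = ∑ _y ∈ π i, (1 : ℝ) := by simp
      _ ≤ Di := by
          refine Finset.sum_le_sum fun y hy => ?_
          have h := Finset.single_le_sum (f := fun z => Real.exp (-‖y - z‖ ^ 2 / σ))
            (fun z _ => (Real.exp_pos _).le) hy
          simpa using h
  have hDj : Dj ≤ ((π j).card : ℝ) * (1 + (((π j).card : ℝ) - 1) * ε) := by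
    have hrow : ∀ y ∈ π j,
        ∑ z ∈ π j, Real.exp (-‖y - z‖ ^ 2 / σ) ≤ 1 + (((π j).card : ℝ) - 1) * ε := by
      intro y hy
      rw [← Finset.sum_erase_add _ _ hy]
      have h1 : Real.exp (-‖y - y‖ ^ 2 / σ) = 1 := by simp
      have h2 : ∑ z ∈ (π j).erase y, Real.exp (-‖y - z‖ ^ 2 / σ)
          ≤ (((π j).card : ℝ) - 1) * ε := by
        calc ∑ z ∈ (π j).erase y, Real.exp (-‖y - z‖ ^ 2 / σ)
            ≤ ∑ _z ∈ (π j).erase y, ε := by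
              refine Finset.sum_le_sum fun z hz => ?_
              exact hker y (hsub j hy) z (hsub j (Finset.mem_of_mem_erase hz))
                (Ne.symm (Finset.ne_of_mem_erase hz))
          _ = (((π j).erase y).card : ℝ) * ε := by rw [Finset.sum_const, nsmul_eq_mul]
          _ = (((π j).card : ℝ) - 1) * ε := by
              rw [Finset.card_erase_of_mem hy]
              have h1le : 1 ≤ (π j).card := Finset.card_pos.2 (hne j)
              push_cast [Nat.cast_sub h1le]
              ring
      linarith
    calc Dj ≤ ∑ _y ∈ π j, (1 + (((π j).card : ℝ) - 1) * ε) :=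
          Finset.sum_le_sum hrow
      _ = ((π j).card : ℝ) * (1 + (((π j).card : ℝ) - 1) * ε) := by
          rw [Finset.sum_const, nsmul_eq_mul]
  -- step A
  have stepA : (2 / ((π i).card : ℝ)) * S2 ≤ 2 * ε := by
    have h := mul_le_mul_of_nonneg_left hS2 (by positivity : (0:ℝ) ≤ 2 / ((π i).card : ℝ))
    have heq : (2 / ((π i).card : ℝ)) * (((π i).card : ℝ) * ε) = 2 * ε := by
      field_simp
    rw [heq] at h; linarith
  -- step B
  have stepB : 1 / ((π i).card : ℝ) ≤ (1 / ((π i).card : ℝ) ^ 2) * Di := by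
    have h := mul_le_mul_of_nonneg_left hDi
      (by positivity : (0:ℝ) ≤ 1 / ((π i).card : ℝ) ^ 2)
    have heq : (1 / ((π i).card : ℝ) ^ 2) * ((π i).card : ℝ) = 1 / ((π i).card : ℝ) := by
      field_simp
    rw [heq] at h; linarith
  -- step C
  have stepC : 2 / ((π j).card : ℝ) ≤ (2 / ((π j).card : ℝ)) * S1 := by
    have h := mul_le_mul_of_nonneg_left hS1 (by positivity : (0:ℝ) ≤ 2 / ((π j).card : ℝ))
    linarith [h]
  -- step D
  have stepD : (1 / ((π j).card : ℝ) ^ 2) * Dj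
      ≤ 1 / ((π j).card : ℝ) + (1 - 1 / ((π j).card : ℝ)) * ε := by
    have h := mul_le_mul_of_nonneg_left hDj
      (by positivity : (0:ℝ) ≤ 1 / ((π j).card : ℝ) ^ 2)
    have heq : (1 / ((π j).card : ℝ) ^ 2) *
        (((π j).card : ℝ) * (1 + (((π j).card : ℝ) - 1) * ε))
        = 1 / ((π j).card : ℝ) + (1 - 1 / ((π j).card : ℝ)) * ε := by
      field_simp
    rw [heq] at h; linarith
  -- step E
  have stepE : 1 - 2 / ((π j).card : ℝ) + (1 / ((π j).card : ℝ)
        + (1 - 1 / ((π j).card : ℝ)) * ε)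
      ≤ 1 - 2 * ε + 1 / ((π i).card : ℝ) := by
    have hinvj : (0:ℝ) ≤ 1 / ((π j).card : ℝ) := by positivity
    have h2 : 0 ≤ 1 / ((π j).card : ℝ) * ε := mul_nonneg hinvj hε0
    ring_nf
    ring_nf at h3ε h2 hinvj
    linarith
  linarith [stepA, stepB, stepC, stepD, stepE]
end

section
/- For the tight example: let n₁ = n₂ = n/2 with n divisible by 2, ε > 0, σ = ε / log(n/3) (assume n > 3), and suppose the RBF kernel values are exp(−ε/σ) = 3/n between y and every point of π₁, exp(−2ε/σ) = 9/n² between y and every other point of π₂, exp(−ε/σ) = 3/n within π₁ and within π₂∖{y}. Then for all sufficiently large n, 2/n₂ < 6/n − 1/n₁ − 3(n₁−1)/(n n₁) − (2(n₂−1)/n₂)(3/n)² + 1/n₂ + 3(n₂−1)(n₂−2)/(n n₂²) + ((n₂−1)/n₂²)(3/n)², i.e., point y switches from cluster π₂ to cluster π₁ under a kernel k-means update. -/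
theorem stmt_19 :
    ∃ N : ℕ, ∀ n : ℕ, N ≤ n → 2 ∣ n → 3 < n →
      ∀ n₁ n₂ : ℝ, n₁ = (n : ℝ) / 2 → n₂ = (n : ℝ) / 2 →
        2 / n₂ <
          6 / (n : ℝ) - 1 / n₁ - 3 * (n₁ - 1) / ((n : ℝ) * n₁)
            - (2 * (n₂ - 1) / n₂) * (3 / (n : ℝ)) ^ 2
            + 1 / n₂ + 3 * (n₂ - 1) * (n₂ - 2) / ((n : ℝ) * n₂ ^ 2)
            + ((n₂ - 1) / n₂ ^ 2) * (3 / (n : ℝ)) ^ 2 := by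
  refine ⟨12, fun n hN _ _ n₁ n₂ h1 h2 => ?_⟩
  have hx : (12 : ℝ) ≤ (n : ℝ) := by exact_mod_cast hN
  have hx0 : (0 : ℝ) < (n : ℝ) := by linarith
  subst h1 h2
  set x : ℝ := (n : ℝ) with hxdef
  have hcubic : (0 : ℝ) < x ^ 3 - 15 * x ^ 2 + 39 * x - 18 := by
    nlinarith [mul_nonneg (by linarith : (0:ℝ) ≤ x - 12) (sq_nonneg (x - 3))]
  have h11 : (0 : ℝ) < x ^ 11 := by positivity
  have key : (0 : ℝ) < 16 * x ^ 11 * (x ^ 3 - 15 * x ^ 2 + 39 * x - 18) := by positivity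
  rw [div_lt_iff₀ (by positivity), ← sub_pos]
  field_simp
  nlinarith [key]
end
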